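/- In the topos of trees, the later modality ▶ has a fixed-point property: for every presheaf X and every morphism f : ▶X → X, there exists a unique morphism fix(f) : 1 → X such that f ∘ next ∘ fix(f) = fix(f), where next : X → ▶X is the canonical natural transformation given by the restriction maps of X. -/

import Mathlib

open CategoryTheory Opposite

/-- The underlying family of the later presheaf. -/
def laterObjFun (X : ℕᵒᵖ ⥤ Type) : ℕ → Type
  | 0 => PUnit
  | Nat.succ k => X.obj (op k)

/-- Restriction maps of the later presheaf. -/
def laterMapFun (X : ℕᵒᵖ ⥤ Type) : ∀ m n : ℕ, m ≤ n → laterObjFun X n → laterObjFun X m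
  | 0, _, _, _ => PUnit.unit
  | Nat.succ k, Nat.succ j, h, x => X.map (homOfLE (Nat.succ_le_succ_iff.mp h)).op x

/-- The later presheaf `▶X`, with `(▶X)(0) = {*}` and `(▶X)(n+1) = X(n)`. -/
def laterObj (X : ℕᵒᵖ ⥤ Type) : ℕᵒᵖ ⥤ Type where
  obj n := laterObjFun X n.unop
  map {n m} h := TypeCat.ofHom (laterMapFun X m.unop n.unop h.unop.le)
  map_id n := by
    ext x
    cases n with
    | op n =>
      cases n with
      | zero => cases x; rfl
      | succ k =>
        show X.map _ x = x
        have : (homOfLE (le_refl k)).op = 𝟙 (op k) := rfl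
        rw [this, X.map_id]; rfl
  map_comp {n m l} h h' := by
    ext x
    cases n with | op n =>
    cases m with | op m =>
    cases l with | op l =>
    cases l with
    | zero => rfl
    | succ lk =>
      cases m with
      | zero => exact absurd h'.unop.le (by simp only [Opposite.unop_op]; omega)
      | succ mk =>
        cases n with
        | zero => exact absurd h.unop.le (by simp only [Opposite.unop_op]; omega)
        | succ nk =>
          show X.map _ x = X.map _ (X.map _ x)
          exact FunctorToTypes.map_comp_apply X _ _ x

/-- The later functor `▶ : Psh(ω) ⥤ Psh(ω)`. -/
def later : (ℕᵒᵖ ⥤ Type) ⥤ (ℕᵒᵖ ⥤ Type) where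
  obj := laterObj
  map {X Y} f :=
    { app := fun n =>
        match n with
        | ⟨0⟩ => TypeCat.ofHom fun x => x
        | ⟨Nat.succ k⟩ => f.app (op k)
      naturality := by
        intro n m h
        ext x
        cases n with | op n =>
        cases m with | op m =>
        cases m with
        | zero => rfl
        | succ mk =>
          cases n with
          | zero => exact absurd h.unop.le (by simp only [Opposite.unop_op]; omega)
          | succ nk =>
            exact ConcreteCategory.congr_hom (f.naturality (homOfLE (Nat.succ_le_succ_iff.mp h.unop.le)).op) x }
  map_id X := by
    apply NatTrans.ext; funext n
    cases n with | op n => cases n <;> rfl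
  map_comp f g := by
    apply NatTrans.ext; funext n
    cases n with | op n => cases n <;> rfl

/-- The canonical natural transformation `next : X ⟶ ▶X`, given by the restriction maps. -/
def nextNat (X : ℕᵒᵖ ⥤ Type) : X ⟶ laterObj X where
  app n :=
    match n with
    | ⟨0⟩ => TypeCat.ofHom fun _ => PUnit.unit
    | ⟨Nat.succ k⟩ => X.map (homOfLE (Nat.le_succ k)).op
  naturality := by
    intro n m h
    ext x
    cases n with | op n =>
    cases m with | op m =>
    cases m with
    | zero => rfl
    | succ mk =>
      cases n with
      | zero => exact absurd h.unop.le (by simp only [Opposite.unop_op]; omega)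
      | succ nk =>
        show X.map _ (X.map _ x) = X.map _ (X.map _ x)
        rw [← CategoryTheory.types_comp_apply (X.map _) (X.map _), ← X.map_comp,
          ← CategoryTheory.types_comp_apply (X.map _) (X.map _), ← X.map_comp]
        rfl

/-!
A global element of `X` is a compatible family `xₙ ∈ X(n)`. Since `(▶X)(n+1) = X(n)` and
`next` is restriction, the fixed-point equation at stage `n+1` reads `xₙ₊₁ = fₙ₊₁(xₙ)`, and at
stage `0` it reads `x₀ = f₀(*)`. This recursion constructs the fixed point, and by induction on
`n` any other fixed point agrees with it.
-/

open Limits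

universe u

lemma mem_sections_of_map_succ {X : ℕᵒᵖ ⥤ Type u} (x : ∀ n, X.obj n)
    (h : ∀ n : ℕ, X.map (homOfLE n.le_succ).op (x (op (n + 1))) = x (op n)) :
    x ∈ X.sections := by
  have compat (m n : ℕ) (hmn : m ≤ n) : X.map (homOfLE hmn).op (x (op n)) = x (op m) := by
    induction n, hmn using Nat.le_induction with
    | base => exact Functor.map_id_apply X _ _
    | succ n hmn ih => rw [← ih, ← h n, ← Functor.map_comp_apply]; rfl
  rintro ⟨n⟩ ⟨m⟩ φ
  rw [Subsingleton.elim φ (homOfLE φ.unop.le).op]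
  exact compat m n φ.unop.le

def globalOfSection {C : Type*} [Category C] {X : C ⥤ Type u} (s : X.sections) :
    ⊤_ (C ⥤ Type u) ⟶ X where
  app j := ↾fun _ => s.1 j
  naturality j j' φ := by ext; exact (s.2 φ).symm

variable {X : ℕᵒᵖ ⥤ Type} (f : later.obj X ⟶ X)

def fixSeq : ∀ n : ℕ, X.obj (op n)
  | 0 => f.app (op 0) PUnit.unit
  | n + 1 => f.app (op (n + 1)) (fixSeq n)

lemma map_fixSeq_succ (n : ℕ) :
    X.map (homOfLE n.le_succ).op (fixSeq f (n + 1)) = fixSeq f n := by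
  -- naturality of `f` turns the restriction of `fₙ₊₁(xₙ)` into `fₙ` of the restriction in `▶X`
  induction n with
  | zero => exact (ConcreteCategory.congr_hom (f.naturality _) _).symm
  | succ n ih =>
    refine (ConcreteCategory.congr_hom (f.naturality _) _).symm.trans ?_
    exact congrArg (f.app (op (n + 1))) ih

lemma fixSeq_mem_sections : (fun n : ℕᵒᵖ => fixSeq f n.unop) ∈ X.sections :=
  mem_sections_of_map_succ (fun n : ℕᵒᵖ => fixSeq f n.unop) (map_fixSeq_succ f)

lemma app_nextNat_fixSeq (n : ℕ) :
    f.app (op n) ((nextNat X).app (op n) (fixSeq f n)) = fixSeq f n := by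
  cases n with
  | zero => rfl
  | succ n => exact congrArg (f.app (op (n + 1))) (map_fixSeq_succ f n)

lemma app_eq_fixSeq_of_fixed {g : ⊤_ (ℕᵒᵖ ⥤ Type) ⟶ X} (hg : g ≫ nextNat X ≫ f = g) (n : ℕ)
    (x : (⊤_ (ℕᵒᵖ ⥤ Type)).obj (op n)) : g.app (op n) x = fixSeq f n := by
  have fixed (n : ℕ) (x : (⊤_ (ℕᵒᵖ ⥤ Type)).obj (op n)) :
      f.app (op n) ((nextNat X).app (op n) (g.app (op n) x)) = g.app (op n) x :=
    ConcreteCategory.congr_hom (NatTrans.congr_app hg (op n)) x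
  induction n with
  | zero => rw [← fixed]; rfl
  | succ n ih =>
    rw [← fixed]
    congr 1
    rw [← ih ((⊤_ (ℕᵒᵖ ⥤ Type)).map (homOfLE n.le_succ).op x)]
    exact (ConcreteCategory.congr_hom (g.naturality _) x).symm

open CategoryTheory.Limits in
/-- Löb induction / the guarded fixed point theorem for global elements: for every
presheaf `X` on `ω` and every `f : ▶X ⟶ X` there is a unique global element
`fix(f) : 1 ⟶ X` with `f ∘ next ∘ fix(f) = fix(f)`. -/
theorem later_fixed_point (X : ℕᵒᵖ ⥤ Type) (f : later.obj X ⟶ X) :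
    ∃! g : ⊤_ (ℕᵒᵖ ⥤ Type) ⟶ X, g ≫ nextNat X ≫ f = g := by
  refine ⟨globalOfSection ⟨_, fixSeq_mem_sections f⟩, ?_, fun g hg => ?_⟩
  · ext ⟨n⟩ x
    exact app_nextNat_fixSeq f n
  · ext ⟨n⟩ x
    exact app_eq_fixSeq_of_fixed f hg n x
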